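/- Let A ⊆ ℝ² be a nonempty bounded open set, x₀ ∈ ℝ², and r > 0. Then Q(A; B_r(x₀)) = i(A) − |A|²/(2π) − |M(A)|²/|A| + (1/(2π))(πr² − |A|)² + |A| · |x₀ − M(A)/|A||². -/

import Mathlib

open MeasureTheory Metric

/-- The plane `ℝ²`. -/
abbrev Plane := EuclideanSpace ℝ (Fin 2)

/-- The mass `|A|` of a set: its two-dimensional Lebesgue measure. -/
noncomputable def mass (A : Set Plane) : ℝ := (volume A).toReal

/-- The momentum `M(A) = ∫_A x dx`. -/
noncomputable def mom (A : Set Plane) : Plane := ∫ x in A, x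

/-- The angular momentum `i(A) = ∫_A |x|² dx`. -/
noncomputable def angMom (A : Set Plane) : ℝ := ∫ x in A, ‖x‖ ^ 2

/-- `Q(A; B_r(x₀)) = ∫_{A △ B_r(x₀)} | |x − x₀|² − r² | dx`. -/
noncomputable def Qfun (A : Set Plane) (x₀ : Plane) (r : ℝ) : ℝ :=
  ∫ x in symmDiff A (ball x₀ r), |‖x - x₀‖ ^ 2 - r ^ 2|

/-!
Write `f x = ‖x - x₀‖² - r²`, which is negative exactly on `B = B_r(x₀)`. Then
`|f| = f` on `A \ B` and `|f| = -f` on `B \ A`, so the integral over `A ∩ B` cancels and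
`Q(A; B) = ∫_A f - ∫_B f`. Expanding the square, `∫_A f = i(A) - 2⟪x₀, M(A)⟫ + |A| (‖x₀‖² - r²)`,
while polar coordinates give `∫_B f = -π r⁴ / 2`. Completing the square in `x₀` yields the formula;
when `|A| = 0` also `M(A) = 0`, so it survives the convention `x / 0 = 0`.
-/

open Set Module

theorem Continuous.integrableOn_of_isBounded {X E : Type*} [MetricSpace X] [ProperSpace X]
    [MeasurableSpace X] [OpensMeasurableSpace X] {μ : Measure X} [IsFiniteMeasureOnCompacts μ]
    [NormedAddCommGroup E] {f : X → E} (hf : Continuous f) {s : Set X}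
    (hs : Bornology.IsBounded s) : IntegrableOn f s μ :=
  (hf.continuousOn.integrableOn_compact hs.isCompact_closure).mono_set subset_closure

theorem setIntegral_symmDiff_abs {α : Type*} [MeasurableSpace α] {μ : Measure α} {s t : Set α}
    {f : α → ℝ} (hs : MeasurableSet s) (ht : MeasurableSet t) (hfs : IntegrableOn f s μ)
    (hft : IntegrableOn f t μ) (h_nonneg : ∀ x ∈ s \ t, 0 ≤ f x)
    (h_nonpos : ∀ x ∈ t \ s, f x ≤ 0) :
    ∫ x in symmDiff s t, |f x| ∂μ = (∫ x in s, f x ∂μ) - ∫ x in t, f x ∂μ := by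
  have h_st : ∫ x in s \ t, |f x| ∂μ = ∫ x in s \ t, f x ∂μ :=
    setIntegral_congr_fun (hs.diff ht) fun x hx => abs_of_nonneg (h_nonneg x hx)
  have h_ts : ∫ x in t \ s, |f x| ∂μ = -∫ x in t \ s, f x ∂μ := by
    rw [← integral_neg]
    exact setIntegral_congr_fun (ht.diff hs) fun x hx => abs_of_nonpos (h_nonpos x hx)
  rw [Set.symmDiff_def,
    setIntegral_union disjoint_sdiff_sdiff (ht.diff hs) (hfs.mono_set sdiff_subset).abs
      (hft.mono_set sdiff_subset).abs, h_st, h_ts,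
    ← integral_inter_add_sdiff ht hfs, ← integral_inter_add_sdiff hs hft, inter_comm]
  ring

theorem setIntegral_norm_sub_sq {E : Type*} [NormedAddCommGroup E] [InnerProductSpace ℝ E]
    [CompleteSpace E] [MeasurableSpace E] {μ : Measure E} {s : Set E} (hs : μ s ≠ ⊤)
    (h_sq : IntegrableOn (fun x => ‖x‖ ^ 2) s μ) (h_id : IntegrableOn (fun x => x) s μ) (x₀ : E) :
    ∫ x in s, ‖x - x₀‖ ^ 2 ∂μ =
      (∫ x in s, ‖x‖ ^ 2 ∂μ) - 2 * inner ℝ x₀ (∫ x in s, x ∂μ) + μ.real s * ‖x₀‖ ^ 2 := by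
  have h_inner : IntegrableOn (fun x => 2 * inner ℝ x₀ x) s μ := (h_id.const_inner x₀).const_mul 2
  have h_diff : IntegrableOn (fun x => ‖x‖ ^ 2 - 2 * inner ℝ x₀ x) s μ := h_sq.sub h_inner
  calc ∫ x in s, ‖x - x₀‖ ^ 2 ∂μ
      = ∫ x in s, (‖x‖ ^ 2 - 2 * inner ℝ x₀ x + ‖x₀‖ ^ 2) ∂μ := by
        congr 1 with x
        rw [norm_sub_sq_real, real_inner_comm]
    _ = _ := by
        rw [integral_add h_diff (integrableOn_const hs), integral_sub h_sq h_inner,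
          integral_const_mul, integral_inner h_id x₀, setIntegral_const, smul_eq_mul]

theorem setIntegral_ball_norm_sub_sq {E : Type*} [NormedAddCommGroup E] [NormedSpace ℝ E]
    [Nontrivial E] [FiniteDimensional ℝ E] [MeasurableSpace E] [BorelSpace E] (μ : Measure E)
    [μ.IsAddHaarMeasure] (x₀ : E) {r : ℝ} (hr : 0 ≤ r) :
    ∫ x in ball x₀ r, ‖x - x₀‖ ^ 2 ∂μ =
      finrank ℝ E * μ.real (ball 0 1) * r ^ (finrank ℝ E + 2) / (finrank ℝ E + 2) := by
  have h_translate : ∫ x in ball x₀ r, ‖x - x₀‖ ^ 2 ∂μ = ∫ x in ball 0 r, ‖x‖ ^ 2 ∂μ := by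
    rw [← (measurePreserving_sub_right μ x₀).setIntegral_preimage_emb
      (measurableEmbedding_subRight x₀) (fun x => ‖x‖ ^ 2)]
    congr
    ext x
    simp [dist_eq_norm]
  have h_radial : ∫ x in ball 0 r, ‖x‖ ^ 2 ∂μ =
      finrank ℝ E • μ.real (ball 0 1) • ∫ y in Ioi (0 : ℝ), y ^ (finrank ℝ E - 1) •
        (Iio r).indicator (· ^ 2) y := by
    rw [← integral_fun_norm_addHaar, ← integral_indicator measurableSet_ball]
    congr with x
    rw [← indicator_comp_right (‖·‖)]
    congr
    ext x
    simp
  rw [h_translate, h_radial]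
  obtain ⟨n, hn⟩ : ∃ n, finrank ℝ E = n + 1 := ⟨_, (Nat.succ_pred_eq_of_pos finrank_pos).symm⟩
  have h_pow : ∀ y : ℝ, y ^ n • (Iio r).indicator (· ^ 2) y = (Iio r).indicator (· ^ (n + 2)) y := by
    intro y
    by_cases hy : y ∈ Iio r <;> simp [hy, ← pow_add]
  simp only [hn, Nat.add_sub_cancel, h_pow]
  rw [setIntegral_indicator measurableSet_Iio, Ioi_inter_Iio, ← integral_Ioc_eq_integral_Ioo,
    ← intervalIntegral.integral_of_le hr, integral_pow]
  simp only [smul_eq_mul, nsmul_eq_mul]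
  push_cast
  field_simp
  ring

theorem mul_norm_sub_inv_smul_sq {E : Type*} [NormedAddCommGroup E] [InnerProductSpace ℝ E]
    (v w : E) {m : ℝ} (hw : m = 0 → w = 0) :
    m * ‖v - m⁻¹ • w‖ ^ 2 = m * ‖v‖ ^ 2 - 2 * inner ℝ v w + ‖w‖ ^ 2 / m := by
  rcases eq_or_ne m 0 with rfl | hm
  · simp [hw rfl]
  rw [norm_sub_sq_real, real_inner_smul_right, norm_smul, Real.norm_eq_abs, mul_pow, sq_abs]
  field_simp

theorem measureReal_ball_zero_one_plane : volume.real (ball (0 : Plane) 1) = Real.pi := by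
  simp [measureReal_def, Real.pi_nonneg]

theorem setIntegral_ball_sq_dist_sub_sq (x₀ : Plane) {r : ℝ} (hr : 0 ≤ r) :
    ∫ x in ball x₀ r, (‖x - x₀‖ ^ 2 - r ^ 2) = -(Real.pi * r ^ 4 / 2) := by
  have h_int : IntegrableOn (fun x : Plane => ‖x - x₀‖ ^ 2) (ball x₀ r) :=
    (by fun_prop : Continuous _).integrableOn_of_isBounded isBounded_ball
  rw [integral_sub h_int (integrableOn_const measure_ball_lt_top.ne),
    setIntegral_ball_norm_sub_sq volume x₀ hr, setIntegral_const, measureReal_ball_zero_one_plane]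
  simp [measureReal_def, hr, Real.pi_nonneg]
  ring

theorem mom_eq_zero_of_mass_eq_zero {A : Set Plane} (hA : volume A ≠ ⊤) (h : mass A = 0) :
    mom A = 0 := by
  have : volume A = 0 := by simpa [mass, ENNReal.toReal_eq_zero_iff, hA] using h
  simp [mom, Measure.restrict_eq_zero.2 this]

theorem setIntegral_sq_dist_sub_sq_of_isBounded {A : Set Plane} (hA : Bornology.IsBounded A)
    (x₀ : Plane) (r : ℝ) :
    ∫ x in A, (‖x - x₀‖ ^ 2 - r ^ 2) =
      angMom A - 2 * inner ℝ x₀ (mom A) + mass A * (‖x₀‖ ^ 2 - r ^ 2) := by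
  have h_sq : IntegrableOn (fun x : Plane => ‖x‖ ^ 2) A :=
    (by fun_prop : Continuous _).integrableOn_of_isBounded hA
  have h_sq_dist : IntegrableOn (fun x : Plane => ‖x - x₀‖ ^ 2) A :=
    (by fun_prop : Continuous _).integrableOn_of_isBounded hA
  rw [integral_sub h_sq_dist (integrableOn_const hA.measure_lt_top.ne),
    setIntegral_norm_sub_sq hA.measure_lt_top.ne h_sq (continuous_id.integrableOn_of_isBounded hA),
    setIntegral_const, angMom, mom, mass, measureReal_def, smul_eq_mul]
  ring

theorem stmt2_general (A : Set Plane) (hA : IsOpen A) (hAb : Bornology.IsBounded A)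
    (x₀ : Plane) (r : ℝ) (hr : 0 < r) :
    Qfun A x₀ r =
      angMom A - (mass A) ^ 2 / (2 * Real.pi) - ‖mom A‖ ^ 2 / mass A
        + (1 / (2 * Real.pi)) * (Real.pi * r ^ 2 - mass A) ^ 2
        + mass A * ‖x₀ - (mass A)⁻¹ • mom A‖ ^ 2 := by
  have hA_fin : volume A ≠ ⊤ := hAb.measure_lt_top.ne
  have hf : Continuous fun x : Plane => ‖x - x₀‖ ^ 2 - r ^ 2 := by fun_prop
  have hQ : Qfun A x₀ r = (∫ x in A, (‖x - x₀‖ ^ 2 - r ^ 2)) -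
      ∫ x in ball x₀ r, (‖x - x₀‖ ^ 2 - r ^ 2) := by
    refine setIntegral_symmDiff_abs hA.measurableSet measurableSet_ball
      (hf.integrableOn_of_isBounded hAb) (hf.integrableOn_of_isBounded isBounded_ball)
      (fun x hx => ?_) (fun x hx => ?_)
    · have : r ≤ ‖x - x₀‖ := by simpa [dist_eq_norm] using hx.2
      nlinarith
    · have : ‖x - x₀‖ < r := by simpa [dist_eq_norm] using hx.1
      nlinarith [norm_nonneg (x - x₀)]
  rw [hQ, setIntegral_sq_dist_sub_sq_of_isBounded hAb, setIntegral_ball_sq_dist_sub_sq x₀ hr.le,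
    mul_norm_sub_inv_smul_sq _ _ (mom_eq_zero_of_mass_eq_zero hA_fin)]
  field_simp
  ring

/-- For a nonempty bounded open set `A ⊆ ℝ²`, `x₀ ∈ ℝ²`, `r > 0`:
`Q(A; B_r(x₀)) = i(A) − |A|²/(2π) − |M(A)|²/|A| + (1/(2π))(πr² − |A|)²
  + |A|·|x₀ − M(A)/|A||²`. -/
theorem stmt2 (A : Set Plane) (hA : IsOpen A) (hAb : Bornology.IsBounded A)
    (hAne : A.Nonempty) (x₀ : Plane) (r : ℝ) (hr : 0 < r) :
    Qfun A x₀ r =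
      angMom A - (mass A) ^ 2 / (2 * Real.pi) - ‖mom A‖ ^ 2 / mass A
        + (1 / (2 * Real.pi)) * (Real.pi * r ^ 2 - mass A) ^ 2
        + mass A * ‖x₀ - (mass A)⁻¹ • mom A‖ ^ 2 :=
  stmt2_general A hA hAb x₀ r hr
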